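/- arXiv:2410.17057 — 2 statements merged into one kernel-verified Lean document; each statement's English description precedes it below -/
import Mathlib

section
/- Write a permutation τ ∈ S_n as τ = m_1 a_1 m_2 a_2 ⋯ m_k a_k, where m_1, …, m_k are the left-to-right minima of τ and each a_i is the (possibly empty) block of entries strictly between m_i and m_{i+1} (with a_k the block after m_k). Then τ belongs to the sorting class of the 1\underline{32}-avoiding stack-sorting map if and only if the concatenation rev(a_1) rev(a_2) ⋯ rev(a_k) is a decreasing sequence, where rev denotes reversal of a block. -/
/-- `τ` contains the vincular pattern with entries `σ` and adjacency-constraint set `A`: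
there is an occurrence of the classical pattern `σ` in `τ` (a strictly increasing choice of
positions carrying entries order-isomorphic to `σ`) such that for every `a ∈ A`, the
occurrence positions corresponding to entries `a` and `a + 1` of `σ` are adjacent in `τ`.
Classical patterns correspond to `A = ∅`. -/
def ContainsV (σ : List ℕ) (A : Set ℕ) (τ : List ℕ) : Prop :=
  ∃ f : Fin σ.length → Fin τ.length,
    StrictMono f ∧
    (∀ a b : Fin σ.length, σ.get a < σ.get b ↔ τ.get (f a) < τ.get (f b)) ∧
    ∀ a : ℕ, a ∈ A → ∀ h : a + 1 < σ.length,
      (f ⟨a + 1, h⟩ : ℕ) = (f ⟨a, Nat.lt_of_succ_lt h⟩ : ℕ) + 1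

open Classical in
/-- The `σ`-avoiding stack pass: `scAux σ A stack input` where the stack is recorded
top-to-bottom; the next input element is pushed when the stack contents together with the
new element on top avoid the vincular pattern `(σ, A)`, and otherwise the top of the stack
is popped to the output; at the end the remaining stack entries are popped to the output. -/
noncomputable def scAux (σ : List ℕ) (A : Set ℕ) : List ℕ → List ℕ → List ℕ
  | stack, [] => stack
  | [], x :: rest => scAux σ A [x] rest
  | y :: stack', x :: rest =>
    if ContainsV σ A (x :: y :: stack') then
      y :: scAux σ A stack' (x :: rest)
    else
      scAux σ A (x :: y :: stack') rest
termination_by stack input => stack.length + 2 * input.length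
decreasing_by all_goals (simp only [List.length_cons, List.length_nil]; omega)

/-- The `(σ, A)`-avoiding stack-sorting map `sc_{(σ, A)}`. -/
noncomputable def sc (σ : List ℕ) (A : Set ℕ) (τ : List ℕ) : List ℕ :=
  scAux σ A [] τ

/-- `τ` is (the one-line notation of) a permutation of `{1, …, n}`. -/
def IsPermList (n : ℕ) (τ : List ℕ) : Prop :=
  τ.Perm (List.range' 1 n)

/-- The sorting class `Sort_n(sc_{(σ, A)})`: permutations of length `n` whose image under
`sc_{(σ, A)}` avoids the classical pattern `231`. -/
def SortSet (σ : List ℕ) (A : Set ℕ) (n : ℕ) : Set (List ℕ) :=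
  {τ | IsPermList n τ ∧ ¬ ContainsV [2, 3, 1] ∅ (sc σ A τ)}

section Lemmas
open List

lemma contains132_intro (L : List ℕ) (i j : ℕ) (hij : i < j) (hj : j + 1 < L.length)
    (h1 : L[i]'(by omega) < L[j+1]) (h2 : L[j+1] < L[j]'(by omega)) : ContainsV [1,3,2] {1} L := by
  have hjL : j < L.length := Nat.lt_of_succ_lt hj
  have hiL : i < L.length := by omega
  refine ⟨![⟨i, hiL⟩, ⟨j, hjL⟩, ⟨j+1, hj⟩], ?_, ?_, ?_⟩
  · intro A B hAB
    fin_cases A <;> fin_cases B <;> simp_all [Fin.lt_def] <;> omega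
  · intro A B
    have h3 : L[i] < L[j] := lt_trans h1 h2
    fin_cases A <;> fin_cases B <;>
      simp_all [List.get_eq_getElem] <;> omega
  · intro A hA h
    have : A = 1 := hA
    subst this
    simp

lemma contains132_elim {L : List ℕ} (h : ContainsV [1,3,2] {1} L) :
    ∃ i j, ∃ (hj : j + 1 < L.length) (hij : i < j),
      L[i]'(by omega) < L[j+1] ∧ L[j+1] < L[j]'(by omega) := by
  obtain ⟨f, hmono, hiso, hadj⟩ := h
  have h3 : (1:ℕ) + 1 < ([1,3,2] : List ℕ).length := by simp
  have hl : ([1,3,2] : List ℕ).length = 3 := rfl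
  set f0 : Fin L.length := f ⟨0, by omega⟩ with hf0
  set f1 : Fin L.length := f ⟨1, by omega⟩ with hf1
  set f2 : Fin L.length := f ⟨2, by omega⟩ with hf2
  have he : (f2 : ℕ) = (f1 : ℕ) + 1 := hadj 1 rfl h3
  have hlt : (f1 : ℕ) + 1 < L.length := he ▸ f2.isLt
  have hm1 : (f0 : ℕ) < (f1 : ℕ) := hmono (show (⟨0, by omega⟩ : Fin _) < ⟨1, by omega⟩ by
    simp [Fin.lt_def])
  have v1 : L.get f0 < L.get f2 := (hiso ⟨0, by omega⟩ ⟨2, by omega⟩).mp (by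
    simp [List.get_eq_getElem])
  have v2 : L.get f2 < L.get f1 := (hiso ⟨2, by omega⟩ ⟨1, by omega⟩).mp (by
    simp [List.get_eq_getElem])
  simp only [List.get_eq_getElem] at v1 v2
  refine ⟨(f0 : ℕ), (f1 : ℕ), hlt, hm1, ?_, ?_⟩
  · simpa [← he] using v1
  · simpa [← he] using v2

lemma contains231_intro (L : List ℕ) (p q r : ℕ) (hpq : p < q) (hqr : q < r)
    (hr : r < L.length) (h1 : L[r] < L[p]'(by omega)) (h2 : L[p]'(by omega) < L[q]'(by omega)) :
    ContainsV [2,3,1] (∅ : Set ℕ) L := by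
  have hqL : q < L.length := lt_trans hqr hr
  have hpL : p < L.length := lt_trans hpq hqL
  refine ⟨![⟨p, hpL⟩, ⟨q, hqL⟩, ⟨r, hr⟩], ?_, ?_, ?_⟩
  · intro A B hAB
    fin_cases A <;> fin_cases B <;> simp_all [Fin.lt_def] <;> omega
  · intro A B
    have h3 : L[r] < L[q] := lt_trans h1 h2
    fin_cases A <;> fin_cases B <;>
      simp_all [List.get_eq_getElem] <;> omega
  · intro A hA
    exact absurd hA (Set.notMem_empty A)

lemma contains231_elim {L : List ℕ} (h : ContainsV [2,3,1] (∅ : Set ℕ) L) :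
    ∃ p q r, ∃ (hr : r < L.length) (hpq : p < q) (hqr : q < r),
      L[r] < L[p]'(by omega) ∧ L[p]'(by omega) < L[q]'(by omega) := by
  obtain ⟨f, hmono, hiso, -⟩ := h
  have hl : ([2,3,1] : List ℕ).length = 3 := rfl
  set f0 : Fin L.length := f ⟨0, by omega⟩ with hf0
  set f1 : Fin L.length := f ⟨1, by omega⟩ with hf1
  set f2 : Fin L.length := f ⟨2, by omega⟩ with hf2
  have v1 : L.get f2 < L.get f0 := (hiso ⟨2, by omega⟩ ⟨0, by omega⟩).mp (by
    simp [List.get_eq_getElem])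
  have v2 : L.get f0 < L.get f1 := (hiso ⟨0, by omega⟩ ⟨1, by omega⟩).mp (by
    simp [List.get_eq_getElem])
  simp only [List.get_eq_getElem] at v1 v2
  exact ⟨(f0 : ℕ), (f1 : ℕ), (f2 : ℕ), f2.isLt,
    hmono (by simp [Fin.lt_def]), hmono (by simp [Fin.lt_def]), v1, v2⟩
end Lemmas

section Lemmas2
open List

lemma contains132_cons {L : List ℕ} (c : ℕ) (h : ContainsV [1,3,2] {1} L) :
    ContainsV [1,3,2] {1} (c :: L) := by
  obtain ⟨i, j, hj, hij, h1, h2⟩ := contains132_elim h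
  exact contains132_intro (c :: L) (i+1) (j+1) (by omega) (by simpa using hj)
    (by simpa using h1) (by simpa using h2)

lemma not_contains132_tail {c : ℕ} {L : List ℕ} (h : ¬ ContainsV [1,3,2] {1} (c :: L)) :
    ¬ ContainsV [1,3,2] {1} L := fun hc => h (contains132_cons c hc)

/-- pop condition characterization -/
lemma pop_iff {x : ℕ} {S : List ℕ} (hS : ¬ ContainsV [1,3,2] {1} S) :
    ContainsV [1,3,2] {1} (x :: S) ↔
      ∃ j, ∃ (hj : j + 1 < S.length), x < S[j+1] ∧ S[j+1] < S[j]'(by omega) := by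
  constructor
  · intro h
    obtain ⟨i, j, hj, hij, h1, h2⟩ := contains132_elim h
    match i, j with
    | 0, j'+1 =>
      refine ⟨j', by simpa using hj, ?_, ?_⟩
      · simpa using h1
      · simpa using h2
    | i'+1, j'+1 =>
      exact absurd (contains132_intro S i' j' (by omega) (by simpa using hj)
        (by simpa using h1) (by simpa using h2)) hS
  · rintro ⟨j, hj, h1, h2⟩
    exact contains132_intro (x :: S) 0 (j+1) (by omega) (by simpa using hj)
      (by simpa using h1) (by simpa using h2)

/-- a strictly increasing list avoids 1-32 -/
lemma not_contains132_of_sorted {L : List ℕ} (h : List.Pairwise (· < ·) L) :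
    ¬ ContainsV [1,3,2] {1} L := by
  intro hc
  obtain ⟨i, j, hj, hij, h1, h2⟩ := contains132_elim hc
  have := (List.pairwise_iff_getElem.mp h) j (j+1) (by omega) hj (by omega)
  omega
end Lemmas2

section Lemmas3
open List

lemma no_pop_of_dom {P M₀ : List ℕ} {b x : ℕ} (hM : List.Pairwise (· < ·) (b :: M₀))
    (hP : ∀ d ∈ P, d < x) (hb : b < x) (hPM : ¬ ContainsV [1,3,2] {1} (P ++ b :: M₀)) :
    ¬ ContainsV [1,3,2] {1} (x :: (P ++ b :: M₀)) := by
  rw [pop_iff hPM]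
  rintro ⟨j, hj, h1, h2⟩
  rcases lt_trichotomy (j+1) P.length with hc | hc | hc
  · have e := List.getElem_append_left (as := P) (bs := b :: M₀) hc (h' := hj)
    have : P[j+1] ∈ P := List.getElem_mem _
    have := hP _ this
    omega
  · have e := List.getElem_append_right (as := P) (bs := b :: M₀) (i := j+1)
      (by omega) (h₂ := hj)
    simp only [show j + 1 - P.length = 0 by omega, List.getElem_cons_zero] at e
    omega
  · have hjP : P.length ≤ j := by omega
    have hlen : j + 1 - P.length < (b :: M₀).length := by
      simp only [List.length_append, List.length_cons] at hj
      simp only [List.length_cons]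
      omega
    have e1 := List.getElem_append_right (as := P) (bs := b :: M₀) (i := j)
      hjP (h₂ := by omega)
    have e2 := List.getElem_append_right (as := P) (bs := b :: M₀) (i := j+1)
      (by omega) (h₂ := hj)
    have := (List.pairwise_iff_getElem.mp hM) (j - P.length) (j + 1 - P.length)
      (by omega) hlen (by omega)
    omega

lemma blame_top {x c b : ℕ} {P' M₀ : List ℕ} (hb : b < x)
    (hx : ContainsV [1,3,2] {1} (x :: ((c :: P') ++ b :: M₀)))
    (hnx : ¬ ContainsV [1,3,2] {1} (x :: (P' ++ b :: M₀)))
    (hinv : ¬ ContainsV [1,3,2] {1} ((c :: P') ++ b :: M₀)) :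
    ∃ p₀ t, P' = p₀ :: t ∧ x < p₀ := by
  have hinv' : ¬ ContainsV [1,3,2] {1} (P' ++ b :: M₀) := not_contains132_tail hinv
  obtain ⟨j, hj, h1, h2⟩ := (pop_iff hinv).mp hx
  match j with
  | j' + 1 =>
    exfalso
    apply hnx
    rw [pop_iff hinv']
    refine ⟨j', by simpa using hj, by simpa using h1, by simpa using h2⟩
  | 0 =>
    have e : ((c :: P') ++ b :: M₀)[1]'(by omega) = (P' ++ b :: M₀)[0]'(by simp) := rfl
    rw [e] at h1
    match hP : P' with
    | [] => simp at h1; omega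
    | p₀ :: t =>
      refine ⟨p₀, t, rfl, ?_⟩
      subst hP
      simpa using h1

lemma contains_flush {z b : ℕ} {c : ℕ} {P₂ M₀ : List ℕ} (hz : z < b)
    (hP : ∀ d ∈ (c :: P₂), b < d) :
    ContainsV [1,3,2] {1} (z :: ((c :: P₂) ++ b :: M₀)) := by
  have hmem : (c :: P₂)[P₂.length]'(by simp) ∈ (c :: P₂) := List.getElem_mem _
  have hlast := hP _ hmem
  have hjlen : P₂.length + 1 + 1 < (z :: ((c :: P₂) ++ b :: M₀)).length := by
    simp only [List.length_cons, List.length_append]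
    omega
  have e : (z :: ((c :: P₂) ++ b :: M₀))[P₂.length + 1 + 1]'hjlen
      = (b :: M₀)[0]'(by simp) := by
    rw [List.getElem_cons_succ]
    have := List.getElem_append_right (as := c :: P₂) (bs := b :: M₀)
      (i := P₂.length + 1) (by simp) (h₂ := by
        simp only [List.length_append, List.length_cons]; omega)
    simpa using this
  have e2 : (z :: ((c :: P₂) ++ b :: M₀))[P₂.length + 1]'(by omega)
      = (c :: P₂)[P₂.length]'(by simp) := by
    rw [List.getElem_cons_succ]
    exact List.getElem_append_left (by simp) (h' := by
      simp only [List.length_append, List.length_cons]; omega)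
  refine contains132_intro (z :: ((c :: P₂) ++ b :: M₀)) 0 (P₂.length + 1)
    (by omega) hjlen ?_ ?_
  · simp only [List.getElem_cons_zero, e]
    simpa using hz
  · simp only [e, e2]
    simpa using hlast
end Lemmas3

section Block
open List

/-- some earlier entry is smaller than some later entry -/
def HasAsc (l : List ℕ) : Prop := ∃ s x B y t, l = s ++ x :: (B ++ y :: t) ∧ x < y

/-- some adjacent descent -/
def DescIn (l : List ℕ) : Prop := ∃ s x y t, l = s ++ x :: y :: t ∧ y < x

lemma hasAsc_cons {l : List ℕ} (c : ℕ) (h : HasAsc l) : HasAsc (c :: l) := by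
  obtain ⟨s, x, B, y, t, rfl, hlt⟩ := h
  exact ⟨c :: s, x, B, y, t, rfl, hlt⟩

lemma hasAsc_pair {x y : ℕ} (P : List ℕ) (h : x < y) : HasAsc (x :: y :: P) :=
  ⟨[], x, [], y, P, rfl, h⟩

lemma descIn_nil : ¬ DescIn [] := by
  rintro ⟨s, x, y, t, h, -⟩
  simp at h

lemma block (b : ℕ) (M₀ : List ℕ) (hM : List.Pairwise (· < ·) (b :: M₀))
    (tl C : List ℕ)
    (Hend : ∀ P'', (∀ x ∈ P'', b < x) → ¬ ContainsV [1,3,2] {1} (P'' ++ b :: M₀) →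
        scAux [1,3,2] {1} (P'' ++ b :: M₀) tl = P'' ++ C) :
    ∀ (N : ℕ) (w P : List ℕ), P.length + 2 * w.length ≤ N →
    (∀ x ∈ P, b < x) → (∀ x ∈ w, b < x) →
    ¬ ContainsV [1,3,2] {1} (P ++ b :: M₀) →
    ∃ O, scAux [1,3,2] {1} (P ++ b :: M₀) (w ++ tl) = O ++ C
      ∧ O.Perm (P ++ w)
      ∧ ((HasAsc P ∨ DescIn w ∨ (∃ u wt p pt, w = u :: wt ∧ P = p :: pt ∧ u < p)
          ∨ (∃ u wt, w = u :: wt ∧ ContainsV [1,3,2] {1} (u :: (P ++ b :: M₀)))) → HasAsc O)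
      ∧ (List.Pairwise (· < ·) w → List.Pairwise (· > ·) P → (∀ x ∈ w, ∀ y ∈ P, y < x) →
          O = w.reverse ++ P) := by
  intro N
  induction N with
  | zero =>
    intro w P hlen hP hw hinv
    match w with
    | [] =>
      refine ⟨P, by simpa using Hend P hP hinv, by simp, ?_, by intros; simp⟩
      rintro (h | h | ⟨u, wt, p, pt, h, -⟩ | ⟨u, wt, h, -⟩)
      · exact h
      · exact absurd h descIn_nil
      · simp at h
      · simp at h
    | x :: w' => simp at hlen
  | succ N IH =>
    intro w P hlen hP hw hinv
    match w with
    | [] =>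
      refine ⟨P, by simpa using Hend P hP hinv, by simp, ?_, by intros; simp⟩
      rintro (h | h | ⟨u, wt, p, pt, h, -⟩ | ⟨u, wt, h, -⟩)
      · exact h
      · exact absurd h descIn_nil
      · simp at h
      · simp at h
    | x :: w' =>
      have hbx : b < x := hw x (by simp)
      have hw' : ∀ y ∈ w', b < y := fun y hy => hw y (by simp [hy])
      by_cases hC : ContainsV [1,3,2] {1} (x :: (P ++ b :: M₀))
      · -- pop case
        match P with
        | [] => exact absurd hC (no_pop_of_dom hM (by simp) hbx hinv)
        | c :: P' =>
          have hinv' : ¬ ContainsV [1,3,2] {1} (P' ++ b :: M₀) := not_contains132_tail hinv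
          have hP' : ∀ y ∈ P', b < y := fun y hy => hP y (by simp [hy])
          have hstep : scAux [1,3,2] {1} ((c :: P') ++ b :: M₀) ((x :: w') ++ tl)
              = c :: scAux [1,3,2] {1} (P' ++ b :: M₀) (x :: (w' ++ tl)) := by
            simp only [List.cons_append]
            rw [scAux, if_pos (show ContainsV [1,3,2] {1} (x :: c :: (P' ++ b :: M₀)) by simpa using hC)]
          obtain ⟨O', heq, hperm, hasc, -⟩ :=
            IH (x :: w') P' (by simp at hlen ⊢; omega) hP' hw hinv'
          simp only [List.cons_append] at heq
          have hHnew : HasAsc O' := by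
            apply hasc
            by_cases hC2 : ContainsV [1,3,2] {1} (x :: (P' ++ b :: M₀))
            · exact Or.inr (Or.inr (Or.inr ⟨x, w', rfl, hC2⟩))
            · obtain ⟨p₀, t, hPe, hxp⟩ := blame_top hbx hC hC2 hinv
              exact Or.inr (Or.inr (Or.inl ⟨x, w', p₀, t, rfl, hPe, hxp⟩))
          refine ⟨c :: O', ?_, ?_, fun _ => hasAsc_cons c hHnew, ?_⟩
          · rw [hstep, heq]; simp
          · calc c :: O' ~ c :: (P' ++ (x :: w')) := hperm.cons c
              _ = (c :: P') ++ (x :: w') := rfl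
          · intro hs1 hs2 hs3
            exfalso
            have hdom : ∀ d ∈ c :: P', d < x := fun d hd => hs3 x (by simp) d hd
            exact absurd hC (no_pop_of_dom hM hdom hbx hinv)
      · -- push case
        have hstep : scAux [1,3,2] {1} (P ++ b :: M₀) ((x :: w') ++ tl)
            = scAux [1,3,2] {1} ((x :: P) ++ b :: M₀) (w' ++ tl) := by
          match P with
          | [] =>
            simp only [List.nil_append, List.cons_append]
            rw [scAux, if_neg (by simpa using hC)]
          | c :: P' =>
            simp only [List.cons_append]
            rw [scAux, if_neg (by simpa using hC)]
        have hPnew : ∀ y ∈ x :: P, b < y := by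
          intro y hy
          rcases List.mem_cons.mp hy with rfl | hy
          · exact hbx
          · exact hP y hy
        obtain ⟨O', heq, hperm, hasc, hsort⟩ :=
          IH w' (x :: P) (by simp at hlen ⊢; omega) hPnew hw' hC
        simp only [List.cons_append] at heq hstep
        refine ⟨O', by simp only [List.cons_append]; rw [hstep, heq], ?_, ?_, ?_⟩
        · calc O' ~ (x :: P) ++ w' := hperm
            _ = x :: (P ++ w') := rfl
            _ ~ P ++ x :: w' := List.perm_middle.symm
        · rintro (h | h | ⟨u, wt, p, pt, hweq, hPeq, hlt⟩ | ⟨u, wt, hweq, hCont⟩)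
          · exact hasc (Or.inl (hasAsc_cons x h))
          · obtain ⟨s, u, v, t, hseq, hlt⟩ := h
            match s, hseq with
            | [], hseq =>
              obtain ⟨rfl, rfl⟩ : x = u ∧ w' = v :: t := by
                constructor <;> [skip; skip] <;> injection hseq with h1 h2 <;> simp_all
              exact hasc (Or.inr (Or.inr (Or.inl ⟨v, t, x, P, rfl, rfl, hlt⟩)))
            | c :: s', hseq =>
              have : w' = s' ++ u :: v :: t := by injection hseq with h1 h2
              exact hasc (Or.inr (Or.inl ⟨s', u, v, t, this, hlt⟩))
          · obtain ⟨rfl, rfl⟩ : x = u ∧ w' = wt := by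
              constructor <;> injection hweq with h1 h2 <;> simp_all
            exact hasc (Or.inl (by rw [hPeq]; exact hasAsc_pair pt hlt))
          · obtain ⟨rfl, -⟩ : x = u ∧ w' = wt := by
              constructor <;> injection hweq with h1 h2 <;> simp_all
            exact absurd hCont hC
        · intro hs1 hs2 hs3
          have hx_w' : ∀ u ∈ w', x < u := fun u hu => (List.pairwise_cons.mp hs1).1 u hu
          have hs2' : List.Pairwise (· > ·) (x :: P) := by
            rw [List.pairwise_cons]
            exact ⟨fun y hy => hs3 x (by simp) y hy, hs2⟩
          have hs3' : ∀ u ∈ w', ∀ y ∈ x :: P, y < u := by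
            intro u hu y hy
            rcases List.mem_cons.mp hy with rfl | hy
            · exact hx_w' u hu
            · exact hs3 u (by simp [hu]) y hy
          rw [hsort (List.pairwise_cons.mp hs1).2 hs2' hs3']
          simp
end Block

section Outer
open List

lemma scAux_nil (σ : List ℕ) (A : Set ℕ) (S : List ℕ) : scAux σ A S [] = S := by
  rw [scAux]

lemma scAux_push {S : List ℕ} {x : ℕ} (r : List ℕ) (h : ¬ ContainsV [1,3,2] {1} (x :: S)) :
    scAux [1,3,2] {1} S (x :: r) = scAux [1,3,2] {1} (x :: S) r := by
  match S with
  | [] => rw [scAux]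
  | y :: S' => rw [scAux, if_neg h]

lemma scAux_pop {S : List ℕ} {x y : ℕ} (r : List ℕ)
    (h : ContainsV [1,3,2] {1} (x :: y :: S)) :
    scAux [1,3,2] {1} (y :: S) (x :: r) = y :: scAux [1,3,2] {1} S (x :: r) := by
  rw [scAux, if_pos h]

lemma flush {b z : ℕ} {M₀ : List ℕ} (rest : List ℕ) (hz : z < b) :
    ∀ P : List ℕ, (∀ d ∈ P, b < d) → ¬ ContainsV [1,3,2] {1} (P ++ b :: M₀) →
    scAux [1,3,2] {1} (P ++ b :: M₀) (z :: rest) = P ++ scAux [1,3,2] {1} (b :: M₀) (z :: rest)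
  | [], _, _ => by simp
  | c :: P₂, hP, hinv => by
    have hstep : scAux [1,3,2] {1} ((c :: P₂) ++ b :: M₀) (z :: rest)
        = c :: scAux [1,3,2] {1} (P₂ ++ b :: M₀) (z :: rest) := by
      simp only [List.cons_append]
      exact scAux_pop rest (by simpa using contains_flush hz hP)
    rw [hstep, flush rest hz P₂ (fun d hd => hP d (by simp [hd])) (not_contains132_tail hinv)]
    simp

lemma outer (m : ℕ → ℕ) (a : ℕ → List ℕ) (k : ℕ)
    (hmins : ∀ i j, i < j → j < k → m j < m i)
    (hblocks : ∀ i, i < k → ∀ x ∈ a i, m i < x) :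
    ∀ d i, i + d = k →
    ∃ O : ℕ → List ℕ,
      scAux [1,3,2] {1} (((List.range i).map m).reverse)
          ((List.range' i d).flatMap (fun j => m j :: a j))
        = (List.range' i d).flatMap O ++ ((List.range k).map m).reverse
      ∧ ∀ j, i ≤ j → j < k →
          ((O j).Perm (a j) ∧ (DescIn (a j) → HasAsc (O j))
            ∧ (List.Pairwise (· < ·) (a j) → O j = (a j).reverse)) := by
  have hNsorted : ∀ i, i ≤ k → List.Pairwise (· < ·) (((List.range i).map m).reverse) := by
    intro i hik
    rw [List.pairwise_reverse, List.pairwise_map]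
    rw [List.pairwise_iff_getElem]
    intro p q hp hq hpq
    simp only [List.getElem_range]
    exact hmins p q hpq (by simp at hq; omega)
  have hNsucc : ∀ i, (((List.range (i+1)).map m).reverse) = m i :: ((List.range i).map m).reverse := by
    intro i
    rw [List.range_succ]
    simp
  intro d
  induction d with
  | zero =>
    intro i hik
    refine ⟨fun _ => [], ?_, ?_⟩
    · have : i = k := by omega
      subst this
      simp [scAux_nil]
    · intro j h1 h2; omega
  | succ d IHd =>
    intro i hik
    obtain ⟨O', heq', hprops'⟩ := IHd (i+1) (by omega)
    have hik' : i < k := by omega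
    have hTi : (List.range' i (d+1)).flatMap (fun j => m j :: a j)
        = m i :: (a i ++ (List.range' (i+1) d).flatMap (fun j => m j :: a j)) := by
      rw [List.range'_succ]
      simp
    set T' := (List.range' (i+1) d).flatMap (fun j => m j :: a j) with hT'
    set Ni := ((List.range i).map m).reverse with hNi
    have hMsort : List.Pairwise (· < ·) (m i :: Ni) := by
      have := hNsorted (i+1) (by omega)
      rwa [hNsucc i] at this
    have hnc : ¬ ContainsV [1,3,2] {1} (m i :: Ni) := not_contains132_of_sorted hMsort
    have hend : ∀ P'', (∀ x ∈ P'', m i < x) →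
        ¬ ContainsV [1,3,2] {1} (P'' ++ m i :: Ni) →
        scAux [1,3,2] {1} (P'' ++ m i :: Ni) T'
          = P'' ++ scAux [1,3,2] {1} (m i :: Ni) T' := by
      intro P'' hP'' hinv''
      match d, hT' with
      | 0, hT' =>
        simp only [hT']
        simp [scAux_nil]
      | d'+1, hT' =>
        have hT2 : T' = m (i+1) :: ((a (i+1)) ++ (List.range' (i+2) d').flatMap (fun j => m j :: a j)) := by
          rw [hT', List.range'_succ]
          simp
        rw [hT2]
        exact flush _ (hmins i (i+1) (by omega) (by omega)) P'' hP'' hinv''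
    have hblock := block (m i) Ni hMsort T' (scAux [1,3,2] {1} (m i :: Ni) T') hend
      ((a i).length + 2 * (a i).length + 2) (a i) [] (by simp; omega)
      (by simp) (fun x hx => hblocks i hik' x hx) (by simpa using hnc)
    obtain ⟨Oi, heqB, hpermB, hascB, hsortB⟩ := hblock
    refine ⟨fun j => if j = i then Oi else O' j, ?_, ?_⟩
    · rw [hTi]
      have hpush : scAux [1,3,2] {1} Ni (m i :: (a i ++ T'))
          = scAux [1,3,2] {1} (m i :: Ni) (a i ++ T') := scAux_push _ hnc
      rw [hpush]
      simp only [List.nil_append] at heqB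
      rw [hNsucc i] at heq'
      rw [heqB, heq']
      rw [List.range'_succ, List.flatMap_cons]
      have hcongr : (List.range' (i+1) d).flatMap (fun j => if j = i then Oi else O' j)
          = (List.range' (i+1) d).flatMap O' := by
        apply List.flatMap_congr
        intro j hj
        have : i + 1 ≤ j := (List.mem_range'_1.mp hj).1
        simp [show j ≠ i by omega]
      rw [hcongr]
      simp [List.append_assoc]
    · intro j h1 h2
      rcases eq_or_lt_of_le h1 with rfl | hlt
      · simp only [if_pos rfl]
        refine ⟨by simpa using hpermB, ?_, ?_⟩
        · intro hdesc
          exact hascB (Or.inr (Or.inl hdesc))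
        · intro hsorted
          have := hsortB hsorted (by simp) (by simp)
          simpa using this
      · have := hprops' j hlt h2
        simpa [show j ≠ i by omega] using this
end Outer

section Split
open List

lemma getElem_append_self (A R : List ℕ) (x : ℕ) :
    (A ++ x :: R)[A.length]'(by simp) = x := by
  rw [List.getElem_append_right (le_refl _)]
  simp

lemma getElem_append_cons (A R : List ℕ) (x : ℕ) (n : ℕ) (h : n < R.length) :
    (A ++ x :: R)[A.length + 1 + n]'(by simp only [List.length_append, List.length_cons]; omega) = R[n] := by
  rw [List.getElem_append_right (by omega)]
  simp only [show A.length + 1 + n - A.length = n + 1 by omega, List.getElem_cons_succ]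

lemma contains231_split (A B C D : List ℕ) (x y z : ℕ) (h1 : z < x) (h2 : x < y) :
    ContainsV [2,3,1] (∅ : Set ℕ) (A ++ x :: (B ++ y :: (C ++ z :: D))) := by
  have e1 : (A ++ x :: (B ++ y :: (C ++ z :: D)))[A.length]'(by simp) = x :=
    getElem_append_self _ _ _
  have e2 : (A ++ x :: (B ++ y :: (C ++ z :: D)))[A.length + 1 + B.length]'(by simp only [List.length_append, List.length_cons]; omega)
      = y := by
    rw [getElem_append_cons A (B ++ y :: (C ++ z :: D)) x B.length (by simp only [List.length_append, List.length_cons]; omega)]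
    exact getElem_append_self _ _ _
  have e3 : (A ++ x :: (B ++ y :: (C ++ z :: D)))[A.length + 1 + (B.length + 1 + C.length)]'
      (by simp only [List.length_append, List.length_cons]; omega) = z := by
    rw [getElem_append_cons A (B ++ y :: (C ++ z :: D)) x (B.length + 1 + C.length)
      (by simp only [List.length_append, List.length_cons]; omega)]
    rw [getElem_append_cons B (C ++ z :: D) y C.length (by simp only [List.length_append, List.length_cons]; omega)]
    exact getElem_append_self _ _ _
  refine contains231_intro _ A.length (A.length + 1 + B.length)
    (A.length + 1 + (B.length + 1 + C.length)) (by omega) (by omega) (by simp only [List.length_append, List.length_cons]; omega) ?_ ?_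
  · simp only [e3, e1]; exact h1
  · simp only [e1, e2]; exact h2

lemma not_chain'_split {r : ℕ → ℕ → Prop} : ∀ {l : List ℕ}, ¬ l.Chain' r →
    ∃ s x y t, l = s ++ x :: y :: t ∧ ¬ r x y
  | [], h => absurd List.isChain_nil h
  | [x], h => absurd (List.isChain_singleton x) h
  | x :: y :: t, h => by
    unfold List.Chain' at h
    rw [List.isChain_cons_cons] at h
    by_cases hxy : r x y
    · have hnc : ¬ (y :: t).Chain' r := fun hc => h ⟨hxy, hc⟩
      obtain ⟨s', x', y', t', heq, hr⟩ := not_chain'_split hnc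
      exact ⟨x :: s', x', y', t', by rw [heq]; rfl, hr⟩
    · exact ⟨[], x, y, t, rfl, hxy⟩

lemma descIn_of_not_sorted {l : List ℕ} (hnd : l.Nodup) (h : ¬ l.Pairwise (· < ·)) :
    DescIn l := by
  have hch : ¬ l.Chain' (· < ·) := fun hc => h (List.isChain_iff_pairwise.mp hc)
  obtain ⟨s, x, y, t, heq, hr⟩ := not_chain'_split hch
  have hnd2 : (x :: y :: t).Nodup := by
    rw [heq] at hnd
    exact hnd.of_append_right
  have hxy : x ≠ y := by
    rw [List.nodup_cons] at hnd2
    exact fun he => hnd2.1 (he ▸ by simp)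
  exact ⟨s, x, y, t, heq, by omega⟩
end Split

/-- Writing τ = m₁a₁m₂a₂⋯m_k a_k, where the m_i are the left-to-right minima of τ,
τ ∈ Sort_n(sc_{1\un{32}}) if and only if rev(a₁)rev(a₂)⋯rev(a_k) is decreasing. -/
theorem sortingClass_1un32_characterization (n k : ℕ) (τ : List ℕ)
    (hτ : IsPermList n τ) (m : ℕ → ℕ) (a : ℕ → List ℕ)
    (hdecomp : τ = (List.range k).flatMap (fun i => m i :: a i))
    (hmins : ∀ i j, i < j → j < k → m j < m i)
    (hblocks : ∀ i < k, ∀ x ∈ a i, m i < x) :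
    τ ∈ SortSet [1, 3, 2] {1} n ↔
      List.Pairwise (· > ·) ((List.range k).flatMap (fun i => (a i).reverse)) := by
  obtain ⟨O, houtEq, hprops⟩ := outer m a k hmins hblocks k 0 (by omega)
  have hscEq : sc [1,3,2] {1} τ
      = (List.range k).flatMap O ++ ((List.range k).map m).reverse := by
    rw [sc, hdecomp]
    simpa [List.range_eq_range'] using houtEq
  have hτnd : τ.Nodup := (hτ.nodup_iff).mpr (List.nodup_range' _)
  have hτdec : (∀ i ∈ List.range k, (m i :: a i).Nodup) ∧
      List.Pairwise (fun i j => ∀ x ∈ m i :: a i, ∀ y ∈ m j :: a j, x ≠ y) (List.range k) := by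
    have hh := hτnd
    rw [hdecomp, List.flatMap_def, List.Nodup, List.pairwise_flatten, List.pairwise_map] at hh
    exact ⟨fun i hi => hh.1 _ (List.mem_map_of_mem hi), hh.2⟩
  have handup : ∀ i, i < k → (a i).Nodup := by
    intro i hi
    exact (List.nodup_cons.mp (hτdec.1 i (List.mem_range.mpr hi))).2
  have hcross_ne : ∀ i j, i < j → j < k → ∀ x ∈ a i, ∀ y ∈ a j, x ≠ y := by
    intro i j hij hjk x hx y hy
    have hcr := List.pairwise_iff_getElem.mp hτdec.2 i j (by simpa using lt_trans hij hjk)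
      (by simpa using hjk) hij
    simp only [List.getElem_range] at hcr
    exact hcr x (by simp [hx]) y (by simp [hy])
  have hchar : ∀ (R : ℕ → ℕ → Prop),
      List.Pairwise R ((List.range k).flatMap (fun i => (a i).reverse)) ↔
      ((∀ i ∈ List.range k, List.Pairwise R ((a i).reverse)) ∧
        List.Pairwise (fun i j => ∀ x ∈ (a i).reverse, ∀ y ∈ (a j).reverse, R x y)
          (List.range k)) := by
    intro R
    rw [List.flatMap_def, List.pairwise_flatten, List.pairwise_map]
    constructor
    · rintro ⟨h1, h2⟩
      exact ⟨fun i hi => h1 _ (List.mem_map_of_mem hi), h2⟩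
    · rintro ⟨h1, h2⟩
      refine ⟨?_, h2⟩
      rintro l' hl'
      obtain ⟨i, hi, rfl⟩ := List.mem_map.mp hl'
      exact h1 i hi
  have hNk : List.Pairwise (· < ·) (((List.range k).map m).reverse) := by
    rw [List.pairwise_reverse, List.pairwise_map, List.pairwise_iff_getElem]
    intro p q hp hq hpq
    simp only [List.getElem_range]
    exact hmins p q hpq (by simpa using hq)
  have hNkcons : k ≠ 0 → ((List.range k).map m).reverse
      = m (k-1) :: ((List.range (k-1)).map m).reverse := by
    intro hk
    conv_lhs => rw [show k = (k-1)+1 by omega, List.range_succ]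
    simp
  constructor
  · rintro ⟨-, havoid⟩
    by_contra hnot
    apply havoid
    rw [hscEq]
    rw [hchar, not_and_or] at hnot
    rcases hnot with hA | hB
    · push_neg at hA
      obtain ⟨i, hi, hnp⟩ := hA
      have hik : i < k := List.mem_range.mp hi
      have hds : DescIn (a i) := by
        apply descIn_of_not_sorted (handup i hik)
        intro hp
        apply hnp
        rw [List.pairwise_reverse]
        exact hp.imp (fun h => h)
      obtain ⟨s, u, B, v, t, hOi, huv⟩ := (hprops i (by omega) hik).2.1 hds
      have humem : u ∈ O i := by rw [hOi]; simp
      have hua : u ∈ a i := ((hprops i (by omega) hik).1).mem_iff.mp humem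
      have hmu : m (k-1) < u := by
        rcases eq_or_lt_of_le (show i ≤ k-1 by omega) with he | hl
        · rw [← he]; exact hblocks i hik u hua
        · exact lt_trans (hmins i (k-1) hl (by omega)) (hblocks i hik u hua)
      have r1 : List.range' 0 k = List.range' 0 i ++ List.range' i (k-i) := by
        have hr1 := List.range'_append (s := 0) (m := i) (n := k-i) (step := 1)
        rw [show 0+1*i = i by omega, show i+(k-i) = k by omega] at hr1
        exact hr1.symm
      have r2 : List.range' i (k-i) = i :: List.range' (i+1) (k-i-1) := by
        rw [show k-i = (k-i-1)+1 by omega, List.range'_succ]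
        simp only [Nat.add_sub_cancel]
      have hrange : List.range k = List.range' 0 i ++ i :: List.range' (i+1) (k-i-1) := by
        rw [List.range_eq_range', r1, r2]
      rw [hNkcons (by omega), hrange, List.flatMap_append, List.flatMap_cons, hOi]
      have hshape : ((List.range' 0 i).flatMap O ++ ((s ++ u :: (B ++ v :: t))
            ++ (List.range' (i+1) (k-i-1)).flatMap O))
            ++ (m (k-1) :: ((List.range (k-1)).map m).reverse)
          = ((List.range' 0 i).flatMap O ++ s) ++ u :: (B ++ v ::
            ((t ++ (List.range' (i+1) (k-i-1)).flatMap O)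
              ++ m (k-1) :: ((List.range (k-1)).map m).reverse)) := by
        simp [List.append_assoc]
      rw [hshape]
      exact contains231_split _ _ _ _ u v (m (k-1)) hmu huv
    · rw [List.pairwise_iff_getElem] at hB
      push_neg at hB
      obtain ⟨i, j, hi, hj, hij, hnr⟩ := hB
      simp only [List.getElem_range] at hnr
      obtain ⟨x, hxmem, y, hymem, hxy⟩ := hnr
      rw [List.mem_reverse] at hxmem hymem
      have hik : i < k := by simpa using hi
      have hjk : j < k := by simpa using hj
      have hxyne : x ≠ y := hcross_ne i j hij hjk x hxmem y hymem
      have hxy' : x < y := by omega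
      have hmx : m (k-1) < x := by
        have hik1 : i < k-1 := by omega
        exact lt_trans (hmins i (k-1) hik1 (by omega)) (hblocks i hik x hxmem)
      have hxO : x ∈ O i := ((hprops i (by omega) hik).1).mem_iff.mpr hxmem
      have hyO : y ∈ O j := ((hprops j (by omega) hjk).1).mem_iff.mpr hymem
      obtain ⟨s1, t1, hOi⟩ := List.append_of_mem hxO
      obtain ⟨s2, t2, hOj⟩ := List.append_of_mem hyO
      have r1 : List.range' 0 k = List.range' 0 i ++ List.range' i (k-i) := by
        have hr1 := List.range'_append (s := 0) (m := i) (n := k-i) (step := 1)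
        rw [show 0+1*i = i by omega, show i+(k-i) = k by omega] at hr1
        exact hr1.symm
      have r2 : List.range' i (k-i) = i :: List.range' (i+1) (k-i-1) := by
        rw [show k-i = (k-i-1)+1 by omega, List.range'_succ]
        simp only [Nat.add_sub_cancel]
      have r3 : List.range' (i+1) (k-i-1)
          = List.range' (i+1) (j-i-1) ++ List.range' j (k-j) := by
        have hr3 := List.range'_append (s := i+1) (m := j-i-1) (n := k-j) (step := 1)
        rw [show (i+1)+1*(j-i-1) = j by omega, show (j-i-1)+(k-j) = k-i-1 by omega] at hr3
        exact hr3.symm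
      have r4 : List.range' j (k-j) = j :: List.range' (j+1) (k-j-1) := by
        rw [show k-j = (k-j-1)+1 by omega, List.range'_succ]
        simp only [Nat.add_sub_cancel]
      have hrange : List.range k = List.range' 0 i ++ i ::
          (List.range' (i+1) (j-i-1) ++ j :: List.range' (j+1) (k-j-1)) := by
        rw [List.range_eq_range', r1, r2, r3, r4]
      rw [hNkcons (by omega), hrange, List.flatMap_append, List.flatMap_cons,
        List.flatMap_append, List.flatMap_cons, hOi, hOj]
      have hshape : ((List.range' 0 i).flatMap O ++ ((s1 ++ x :: t1) ++
            ((List.range' (i+1) (j-i-1)).flatMap O ++ ((s2 ++ y :: t2) ++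
              (List.range' (j+1) (k-j-1)).flatMap O))))
            ++ (m (k-1) :: ((List.range (k-1)).map m).reverse)
          = ((List.range' 0 i).flatMap O ++ s1) ++ x ::
            ((t1 ++ (List.range' (i+1) (j-i-1)).flatMap O ++ s2) ++ y ::
              ((t2 ++ (List.range' (j+1) (k-j-1)).flatMap O)
                ++ m (k-1) :: ((List.range (k-1)).map m).reverse)) := by
        simp [List.append_assoc]
      rw [hshape]
      exact contains231_split _ _ _ _ x y (m (k-1)) hmx hxy'
  · intro hsorted
    refine ⟨hτ, ?_⟩
    rw [hscEq]
    have hparts := (hchar (· > ·)).mp hsorted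
    have hOi_eq : ∀ i ∈ List.range k, O i = (a i).reverse := by
      intro i hi
      have hik := List.mem_range.mp hi
      apply (hprops i (by omega) hik).2.2
      have hpi := hparts.1 i hi
      rw [List.pairwise_reverse] at hpi
      exact hpi.imp (fun h => h)
    rw [List.flatMap_congr hOi_eq]
    intro hcont
    obtain ⟨p, q, r, hr, hpq, hqr, hv1, hv2⟩ := contains231_elim hcont
    have hr' : r < ((List.range k).flatMap (fun i => (a i).reverse)).length
        + (((List.range k).map m).reverse).length := by
      rw [← List.length_append]; exact hr
    by_cases hq : q < ((List.range k).flatMap (fun i => (a i).reverse)).length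
    · have hp : p < ((List.range k).flatMap (fun i => (a i).reverse)).length := by omega
      have e1 := List.getElem_append_left (as := (List.range k).flatMap (fun i => (a i).reverse))
        (bs := ((List.range k).map m).reverse) hp (h' := by rw [List.length_append]; omega)
      have e2 := List.getElem_append_left (as := (List.range k).flatMap (fun i => (a i).reverse))
        (bs := ((List.range k).map m).reverse) hq (h' := by rw [List.length_append]; omega)
      have hgt := List.pairwise_iff_getElem.mp hsorted p q hp hq hpq
      rw [e1, e2] at hv2
      omega
    · have e1 := List.getElem_append_right
        (as := (List.range k).flatMap (fun i => (a i).reverse))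
        (bs := ((List.range k).map m).reverse) (i := q) (by omega)
        (h₂ := by rw [List.length_append]; omega)
      have e2 := List.getElem_append_right
        (as := (List.range k).flatMap (fun i => (a i).reverse))
        (bs := ((List.range k).map m).reverse) (i := r) (by omega)
        (h₂ := by rw [List.length_append]; omega)
      have hlt := List.pairwise_iff_getElem.mp hNk
        (q - ((List.range k).flatMap (fun i => (a i).reverse)).length)
        (r - ((List.range k).flatMap (fun i => (a i).reverse)).length)
        (by omega) (by omega) (by omega)
      rw [e1] at hv2
      rw [e2] at hv1
      omega
end

section
/- For every n ≥ 1, the number of permutations of length n avoiding both the vincular pattern 3\underline{21} and the classical pattern 132 is 2^{n−1}; moreover |Av_0(3\underline{21}, 132)| = 1. -/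
lemma getElem_congr_idx' {l : List ℕ} {i j : ℕ} (h : i = j) (hi : i < l.length)
    (hj : j < l.length) : l[i] = l[j] := by subst h; rfl

/-- elementary 3-21 badness -/
def Bad1 (τ : List ℕ) : Prop :=
  ∃ i j : ℕ, ∃ hj1 : j + 1 < τ.length, ∃ hj : j < τ.length, ∃ hi : i < τ.length,
    i < j ∧ τ[j+1] < τ[j] ∧ τ[j] < τ[i]

/-- elementary 132 badness -/
def Bad2 (τ : List ℕ) : Prop :=
  ∃ i j k : ℕ, ∃ hk : k < τ.length, ∃ hj : j < τ.length, ∃ hi : i < τ.length,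
    i < j ∧ j < k ∧ τ[i] < τ[k] ∧ τ[k] < τ[j]

lemma containsV_132_iff (τ : List ℕ) : ContainsV [1, 3, 2] ∅ τ ↔ Bad2 τ := by
  constructor
  · rintro ⟨f, hmono, hiff, -⟩
    refine ⟨f ⟨0, by norm_num⟩, f ⟨1, by norm_num⟩, f ⟨2, by norm_num⟩,
      (f ⟨2, by norm_num⟩).isLt, (f ⟨1, by norm_num⟩).isLt, (f ⟨0, by norm_num⟩).isLt,
      ?_, ?_, ?_, ?_⟩
    · exact hmono (show (⟨0, by norm_num⟩ : Fin 3) < ⟨1, by norm_num⟩ by decide)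
    · exact hmono (show (⟨1, by norm_num⟩ : Fin 3) < ⟨2, by norm_num⟩ by decide)
    · have := (hiff ⟨0, by norm_num⟩ ⟨2, by norm_num⟩).1 (by decide)
      simpa [List.get_eq_getElem] using this
    · have := (hiff ⟨2, by norm_num⟩ ⟨1, by norm_num⟩).1 (by decide)
      simpa [List.get_eq_getElem] using this
  · rintro ⟨i, j, k, hk, hj, hi, hij, hjk, h1, h2⟩
    refine ⟨![⟨i, hi⟩, ⟨j, hj⟩, ⟨k, hk⟩], ?_, ?_, by simp⟩
    · intro a b hab
      fin_cases a <;> fin_cases b <;> simp_all [Fin.lt_def] <;> omega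
    · intro a b
      fin_cases a <;> fin_cases b <;>
        simp_all [List.get_eq_getElem, Fin.lt_def] <;> omega

lemma containsV_321_iff (τ : List ℕ) : ContainsV [3, 2, 1] {1} τ ↔ Bad1 τ := by
  have p0 : (0:ℕ) < ([3,2,1]:List ℕ).length := by norm_num
  have p1 : (1:ℕ) < ([3,2,1]:List ℕ).length := by norm_num
  have p2 : (2:ℕ) < ([3,2,1]:List ℕ).length := by norm_num
  constructor
  · rintro ⟨f, hmono, hiff, hadj⟩
    have h01 : f ⟨0, p0⟩ < f ⟨1, p1⟩ := hmono (by norm_num [Fin.lt_def])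
    have hA : ((f ⟨2, p2⟩ : Fin τ.length) : ℕ) = ((f ⟨1, p1⟩ : Fin τ.length) : ℕ) + 1 :=
      hadj 1 rfl p2
    have v21 : τ.get (f ⟨2, p2⟩) < τ.get (f ⟨1, p1⟩) := (hiff _ _).1 (by norm_num)
    have v10 : τ.get (f ⟨1, p1⟩) < τ.get (f ⟨0, p0⟩) := (hiff _ _).1 (by norm_num)
    simp only [List.get_eq_getElem] at v21 v10
    have hj1 : ((f ⟨1, p1⟩ : Fin τ.length) : ℕ) + 1 < τ.length := by
      rw [← hA]; exact (f ⟨2, p2⟩).isLt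
    refine ⟨(f ⟨0, p0⟩ : Fin τ.length), (f ⟨1, p1⟩ : Fin τ.length), hj1,
      (f ⟨1, p1⟩).isLt, (f ⟨0, p0⟩).isLt, h01, ?_, v10⟩
    rw [getElem_congr_idx' hA.symm hj1 (f ⟨2, p2⟩).isLt]
    exact v21
  · rintro ⟨i, j, hj1, hj, hi, hij, h1, h2⟩
    refine ⟨![⟨i, hi⟩, ⟨j, hj⟩, ⟨j+1, hj1⟩], ?_, ?_, ?_⟩
    · intro a b hab
      fin_cases a <;> fin_cases b <;> simp_all [Fin.lt_def] <;> omega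
    · intro a b
      fin_cases a <;> fin_cases b <;>
        simp_all [List.get_eq_getElem, Fin.lt_def] <;> omega
    · intro a ha h
      have : a = 1 := ha
      subst this
      simp

def AvSet (n : ℕ) : Set (List ℕ) :=
  {τ | IsPermList n τ ∧ ¬ ContainsV [3, 2, 1] {1} τ ∧ ¬ ContainsV [1, 3, 2] ∅ τ}

lemma mem_avSet_iff {n : ℕ} {τ : List ℕ} :
    τ ∈ AvSet n ↔ τ.Perm (List.range' 1 n) ∧ ¬ Bad1 τ ∧ ¬ Bad2 τ := by
  unfold AvSet IsPermList
  rw [Set.mem_setOf_eq, containsV_321_iff, containsV_132_iff]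

/- getElem helpers for a ++ x :: b -/
lemma ge_left {a b : List ℕ} {x : ℕ} {p : ℕ} (hp : p < a.length)
    (H : p < (a ++ x :: b).length) : (a ++ x :: b)[p] = a[p] :=
  List.getElem_append_left hp

lemma ge_mid (a b : List ℕ) (x : ℕ)
    (H : a.length < (a ++ x :: b).length) : (a ++ x :: b)[a.length] = x := by
  rw [List.getElem_append_right (le_refl _)]
  simp

lemma ge_right {a b : List ℕ} {x : ℕ} {p : ℕ} (hp : a.length < p)
    (H : p < (a ++ x :: b).length) :
    (a ++ x :: b)[p] = b[p - a.length - 1]'(by simp at H; omega) := by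
  rw [List.getElem_append_right (by omega)]
  have h2 : p - a.length = (p - a.length - 1) + 1 := by omega
  rw [getElem_congr_idx' h2 (by simp at H ⊢; omega) (by simp at H ⊢; omega)]
  simp

lemma len_mid (a b : List ℕ) (x : ℕ) : (a ++ x :: b).length = a.length + b.length + 1 := by
  simp; omega

lemma range'_map_add (k s m : ℕ) : (List.range' s m).map (· + k) = List.range' (s + k) m := by
  induction m generalizing s with
  | zero => simp
  | succ m ih =>
      rw [List.range'_succ, List.map_cons, ih, List.range'_succ,
        show s + 1 + k = s + k + 1 from by omega]

lemma range'_map_sub (k s m : ℕ) :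
    (List.range' (s + k) m).map (fun x => x - k) = List.range' s m := by
  induction m generalizing s with
  | zero => simp
  | succ m ih =>
      rw [List.range'_succ, List.range'_succ, List.map_cons,
        show s + k + 1 = (s + 1) + k from by omega, ih (s + 1),
        show s + k - k = s from by omega]

lemma range'_split (n k : ℕ) (h : k ≤ n) :
    List.range' 1 n = List.range' 1 k ++ List.range' (k + 1) (n - k) := by
  have := List.range'_append (s := 1) (m := k) (n := n - k) (step := 1)
  rw [show 1 + 1 * k = k + 1 by omega, show k + (n - k) = n by omega] at this
  exact this.symm

lemma range'_snoc (s m : ℕ) : List.range' s (m + 1) = List.range' s m ++ [s + m] := by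
  have := List.range'_append (s := s) (m := m) (n := 1) (step := 1)
  rw [Nat.one_mul] at this
  rw [← this]
  congr 1

/-- value of a list at an index, default 0 -/
def v (l : List ℕ) (p : ℕ) : ℕ := l.getD p 0

lemma getElem_eq_v {l : List ℕ} {i : ℕ} (h : i < l.length) : l[i] = v l i :=
  (List.getD_eq_getElem l 0 h).symm

lemma bad1_iff (τ : List ℕ) :
    Bad1 τ ↔ ∃ i j : ℕ, j + 1 < τ.length ∧ i < j ∧
      v τ (j+1) < v τ j ∧ v τ j < v τ i := by
  constructor
  · rintro ⟨i, j, hj1, hj, hi, hij, h1, h2⟩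
    rw [getElem_eq_v, getElem_eq_v] at h1
    rw [getElem_eq_v, getElem_eq_v] at h2
    exact ⟨i, j, hj1, hij, h1, h2⟩
  · rintro ⟨i, j, hj1, hij, h1, h2⟩
    refine ⟨i, j, hj1, by omega, by omega, hij, ?_, ?_⟩ <;>
      rw [getElem_eq_v, getElem_eq_v] <;> assumption

lemma bad2_iff (τ : List ℕ) :
    Bad2 τ ↔ ∃ i j k : ℕ, k < τ.length ∧ i < j ∧ j < k ∧
      v τ i < v τ k ∧ v τ k < v τ j := by
  constructor
  · rintro ⟨i, j, k, hk, hj, hi, hij, hjk, h1, h2⟩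
    rw [getElem_eq_v, getElem_eq_v] at h1
    rw [getElem_eq_v, getElem_eq_v] at h2
    exact ⟨i, j, k, hk, hij, hjk, h1, h2⟩
  · rintro ⟨i, j, k, hk, hij, hjk, h1, h2⟩
    refine ⟨i, j, k, hk, by omega, by omega, hij, hjk, ?_, ?_⟩ <;>
      rw [getElem_eq_v, getElem_eq_v] <;> assumption


lemma v_append_left {a b : List ℕ} {x p : ℕ} (hp : p < a.length) :
    v (a ++ x :: b) p = v a p := by
  rw [← getElem_eq_v (l := a ++ x :: b) (by simp only [List.length_append, List.length_cons, List.length_map, List.length_range']; omega), ← getElem_eq_v hp]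
  exact ge_left hp _

lemma v_append_mid (a b : List ℕ) (x : ℕ) : v (a ++ x :: b) a.length = x := by
  rw [← getElem_eq_v (l := a ++ x :: b) (by simp only [List.length_append, List.length_cons, List.length_map, List.length_range']; omega)]
  exact ge_mid a b x (by simp only [List.length_append, List.length_cons, List.length_map, List.length_range']; omega)

lemma v_append_right {a b : List ℕ} {x p : ℕ} (hp : a.length < p)
    (h : p < a.length + b.length + 1) : v (a ++ x :: b) p = v b (p - a.length - 1) := by
  rw [← getElem_eq_v (l := a ++ x :: b) (by simp only [List.length_append, List.length_cons, List.length_map, List.length_range']; omega),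
    ← getElem_eq_v (l := b) (by omega)]
  exact ge_right hp _

lemma v_map_add {σ : List ℕ} {k p : ℕ} (hp : p < σ.length) :
    v (σ.map (· + k)) p = v σ p + k := by
  rw [← getElem_eq_v (l := σ.map (· + k)) (by simp only [List.length_append, List.length_cons, List.length_map, List.length_range']; omega), ← getElem_eq_v hp]
  simp

lemma v_range' {s m p : ℕ} (hp : p < m) : v (List.range' s m) p = s + p := by
  rw [← getElem_eq_v (l := List.range' s m) (by simp only [List.length_append, List.length_cons, List.length_map, List.length_range']; omega)]
  rw [List.getElem_range']
  omega

lemma build_mem {n k : ℕ} (hk : k < n) {σ : List ℕ}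
    (hp : σ.Perm (List.range' 1 (n - 1 - k))) (h1 : ¬ Bad1 σ) (h2 : ¬ Bad2 σ) :
    (σ.map (· + k) ++ n :: List.range' 1 k) ∈ AvSet n := by
  set m := n - 1 - k with hm
  have hmn : m + 1 + k = n := by omega
  have hlσ : σ.length = m := by simpa using hp.length_eq
  set a := σ.map (· + k) with ha
  have hla : a.length = m := by simp [ha, hlσ]
  set τ := a ++ n :: List.range' 1 k with hτ
  have hlτ : τ.length = n := by rw [hτ, len_mid, hla, List.length_range']; omega
  -- value facts
  have hvA : ∀ p, p < m → v τ p = v σ p + k := by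
    intro p hpp
    rw [hτ, v_append_left (by omega)]
    rw [ha, v_map_add (by omega)]
  have hσv : ∀ p, p < m → 1 ≤ v σ p ∧ v σ p ≤ m := by
    intro p hpp
    rw [← getElem_eq_v (l := σ) (by omega)]
    have hmem : σ[p]'(by omega) ∈ List.range' 1 m := hp.subset (List.getElem_mem _)
    rw [List.mem_range'_1] at hmem
    omega
  have hvM : v τ m = n := by
    rw [hτ, ← hla, v_append_mid]
  have hvB : ∀ p, m < p → p < n → v τ p = p - m := by
    intro p hp1 hp2
    rw [hτ, v_append_right (by omega) (by rw [hla, List.length_range']; omega),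
      v_range' (by omega)]
    omega
  have hub : ∀ p, p < n → v τ p ≤ n := by
    intro p hpn
    rcases lt_trichotomy p m with h | h | h
    · have := hvA p h; have := hσv p h; omega
    · subst h; omega
    · have := hvB p h hpn; omega
  have hbig : ∀ p, p ≤ m → p < n → k + 1 ≤ v τ p := by
    intro p hpm hpn
    rcases eq_or_lt_of_le hpm with h | h
    · subst h; omega
    · have := hvA p h; have := hσv p h; omega
  -- no Bad2
  have hnb2 : ¬ Bad2 τ := by
    rw [bad2_iff]
    rintro ⟨i, j, kk, hkk, hij, hjk, hx1, hx2⟩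
    rw [hlτ] at hkk
    rcases lt_trichotomy kk m with h | h | h
    · apply h2
      rw [bad2_iff]
      have e1 := hvA i (by omega)
      have e2 := hvA j (by omega)
      have e3 := hvA kk (by omega)
      exact ⟨i, j, kk, by omega, hij, hjk, by omega, by omega⟩
    · rw [h] at hx2
      have := hub j (by omega)
      omega
    · have hkv := hvB kk h hkk
      have hiv : m < i := by
        by_contra hcon
        have := hbig i (by omega) (by omega)
        omega
      have := hvB i hiv (by omega)
      have := hvB j (by omega) (by omega)
      omega
  -- no Bad1
  have hnb1 : ¬ Bad1 τ := by
    rw [bad1_iff]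
    rintro ⟨i, j, hj1, hij, hx1, hx2⟩
    rw [hlτ] at hj1
    rcases lt_trichotomy j m with h | h | h
    · rcases eq_or_lt_of_le (show j + 1 ≤ m by omega) with h' | h'
      · rw [h'] at hx1
        have := hub j (by omega)
        omega
      · apply h1
        rw [bad1_iff]
        have e1 := hvA i (by omega)
        have e2 := hvA j (by omega)
        have e3 := hvA (j+1) (by omega)
        exact ⟨i, j, by omega, hij, by omega, by omega⟩
    · rw [h] at hx2
      have := hub i (by omega)
      omega
    · have := hvB j h (by omega)
      have := hvB (j+1) (by omega) (by omega)
      omega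
  -- permutation
  have hperm : τ.Perm (List.range' 1 n) := by
    have e1 : List.range' 1 n = List.range' 1 k ++ List.range' (k+1) (n - k) :=
      range'_split n k (le_of_lt hk)
    have e2 : List.range' (k+1) (n-k) = List.range' (k+1) m ++ [n] := by
      have h3 := range'_snoc (k+1) m
      rw [show k+1+m = n from by omega] at h3
      rw [show n - k = m + 1 from by omega]
      exact h3
    have h3 : a.Perm (List.range' (k+1) m) := by
      rw [ha]
      have h4 := hp.map (· + k)
      rwa [range'_map_add k 1 m, show 1 + k = k + 1 from by omega] at h4
    rw [hτ]
    refine ((h3.append_right _).trans ?_)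
    refine List.perm_middle.trans ?_
    refine (List.perm_append_comm.cons _).trans ?_
    rw [e1, e2, ← List.append_assoc]
    exact (List.perm_append_singleton _ _).symm
  exact mem_avSet_iff.mpr ⟨hperm, hnb1, hnb2⟩

lemma v_map_sub {σ : List ℕ} {k p : ℕ} (hp : p < σ.length) :
    v (σ.map (fun x => x - k)) p = v σ p - k := by
  rw [← getElem_eq_v (l := σ.map (fun x => x - k)) (by simpa using hp), ← getElem_eq_v hp]
  simp

lemma v_mem {l : List ℕ} {p : ℕ} (hp : p < l.length) : v l p ∈ l := by
  rw [← getElem_eq_v hp]; exact List.getElem_mem _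

lemma mem_v {l : List ℕ} {x : ℕ} (hx : x ∈ l) : ∃ p, p < l.length ∧ v l p = x := by
  obtain ⟨p, hp, he⟩ := List.mem_iff_getElem.mp hx
  exact ⟨p, hp, by rw [← getElem_eq_v hp]; exact he⟩

lemma perm_build (n k : ℕ) (hk : k < n) :
    (List.range' (k+1) (n-1-k) ++ n :: List.range' 1 k).Perm (List.range' 1 n) := by
  set m := n - 1 - k with hm
  have e1 : List.range' 1 n = List.range' 1 k ++ List.range' (k+1) (n - k) :=
    range'_split n k (le_of_lt hk)
  have e2 : List.range' (k+1) (n-k) = List.range' (k+1) m ++ [n] := by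
    have h3 := range'_snoc (k+1) m
    rw [show k+1+m = n from by omega] at h3
    rw [show n - k = m + 1 from by omega]
    exact h3
  refine List.perm_middle.trans ?_
  refine (List.perm_append_comm.cons _).trans ?_
  rw [e1, e2, ← List.append_assoc]
  exact (List.perm_append_singleton _ _).symm

lemma decomp {n : ℕ} {τ : List ℕ} (hτ : τ ∈ AvSet n) (hn : 1 ≤ n) :
    ∃ k, k < n ∧ ∃ σ, σ.Perm (List.range' 1 (n - 1 - k)) ∧ ¬ Bad1 σ ∧ ¬ Bad2 σ ∧
      τ = σ.map (· + k) ++ n :: List.range' 1 k := by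
  obtain ⟨hperm, hb1, hb2⟩ := mem_avSet_iff.mp hτ
  have hnd : τ.Nodup := hperm.nodup_iff.mpr (List.nodup_range' (s := 1) (n := n))
  have hmemτ : ∀ x ∈ τ, 1 ≤ x ∧ x < 1 + n := fun x hx => List.mem_range'_1.mp (hperm.subset hx)
  have hnmem : n ∈ τ := hperm.mem_iff.mpr (List.mem_range'_1.mpr ⟨by omega, by omega⟩)
  obtain ⟨a, b, rfl⟩ := List.append_of_mem hnmem
  set k := b.length with hk
  have hablen : a.length + k + 1 = n := by
    have := hperm.length_eq
    simp at this
    omega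
  -- nodup pieces
  rw [List.nodup_append] at hnd
  obtain ⟨hnda, hndnb, hdisj⟩ := hnd
  have hnnb : n ∉ b := by
    intro h; exact (List.nodup_cons.mp hndnb).1 h
  have hndb : b.Nodup := (List.nodup_cons.mp hndnb).2
  have hbn : ∀ y ∈ b, y < n := by
    intro y hy
    have h1 := hmemτ y (by simp [hy])
    have : y ≠ n := fun h => hnnb (h ▸ hy)
    omega
  have han : ∀ x ∈ a, x ≤ n := by
    intro x hx
    have := hmemτ x (by simp [hx])
    omega
  -- Step A : elements of b are less than elements of a
  have hba : ∀ x ∈ a, ∀ y ∈ b, y < x := by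
    intro x hx y hy
    by_contra hcon
    have hxy : x ≠ y := by
      intro h; exact hdisj x hx y (by simp [hy]) h
    have hlt : x < y := by omega
    obtain ⟨i, hi, hvi⟩ := mem_v hx
    obtain ⟨q, hq, hvq⟩ := mem_v hy
    apply hb2
    rw [bad2_iff]
    refine ⟨i, a.length, a.length + 1 + q, by simp; omega, by omega, by omega, ?_, ?_⟩
    · rw [v_append_left hi, v_append_right (by omega) (by omega), hvi,
        show a.length + 1 + q - a.length - 1 = q from by omega, hvq]
      exact hlt
    · rw [v_append_right (by omega) (by omega), v_append_mid,
        show a.length + 1 + q - a.length - 1 = q from by omega, hvq]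
      exact hbn y hy
  -- Step B : b is sorted
  have hbsort : b.Pairwise (· < ·) := by
    rw [← List.isChain_iff_pairwise, List.isChain_iff_getElem]
    intro q hq
    rw [getElem_eq_v, getElem_eq_v]
    have hne : v b q ≠ v b (q + 1) := by
      rw [← getElem_eq_v (by omega), ← getElem_eq_v (by omega)]
      rw [Ne, List.Nodup.getElem_inj_iff hndb]
      omega
    rcases Nat.lt_or_ge (v b q) (v b (q+1)) with h | h
    · exact h
    · exfalso
      apply hb1
      rw [bad1_iff]
      refine ⟨a.length, a.length + 1 + q, by simp; omega, by omega, ?_, ?_⟩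
      · rw [show a.length + 1 + q + 1 = a.length + 1 + (q + 1) from by omega,
          v_append_right (by omega) (by omega), v_append_right (by omega) (by omega),
          show a.length + 1 + (q + 1) - a.length - 1 = q + 1 from by omega,
          show a.length + 1 + q - a.length - 1 = q from by omega]
        omega
      · rw [v_append_right (by omega) (by omega), v_append_mid,
          show a.length + 1 + q - a.length - 1 = q from by omega]
        exact hbn _ (v_mem (by omega))
  -- Step C : every element of b is at most k
  have hbk : ∀ y ∈ b, y ≤ k := by
    intro y hy
    have hsub : List.range' 1 y ⊆ b := by
      intro z hz
      rw [List.mem_range'_1] at hz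
      have hzy : z ≤ y := by omega
      have hyn : y < n := hbn y hy
      have hzτ : z ∈ a ++ n :: b := hperm.mem_iff.mpr (List.mem_range'_1.mpr ⟨hz.1, by omega⟩)
      rcases List.mem_append.mp hzτ with h | h
      · exact absurd (hba z h y hy) (by omega)
      · rcases List.mem_cons.mp h with h | h
        · omega
        · exact h
    have := (List.subperm_of_subset (List.nodup_range' (s := 1) (n := y)) hsub).length_le
    simpa using this
  -- Step D : b = range' 1 k
  have hbeq : b = List.range' 1 k := by
    apply List.Perm.eq_of_pairwise (fun a b _ _ h1 h2 => absurd (lt_trans h1 h2) (lt_irrefl _)) hbsort (List.pairwise_lt_range' (s := 1) (n := k)) ?_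
    apply List.Subperm.perm_of_length_le
    · apply List.subperm_of_subset hndb
      intro y hy
      have := hmemτ y (by simp [hy])
      exact List.mem_range'_1.mpr ⟨by omega, by have := hbk y hy; omega⟩
    · simp [hk]
  -- Step E : a is a permutation of range' (k+1) (n-1-k)
  set m := n - 1 - k with hm
  have hma : a.length = m := by omega
  have haperm : a.Perm (List.range' (k+1) m) := by
    apply (List.perm_append_right_iff (n :: List.range' 1 k)).mp
    have hperm' : (a ++ n :: List.range' 1 k).Perm (List.range' 1 n) := by
      rw [← hbeq]; exact hperm
    exact hperm'.trans (perm_build n k (by omega)).symm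
  -- Step F : conclude
  have hka : ∀ x ∈ a, k < x := by
    intro x hx
    rcases Nat.eq_zero_or_pos k with h | h
    · have := hmemτ x (by simp [hx]); omega
    · have hkb : k ∈ b := by
        rw [hbeq]; exact List.mem_range'_1.mpr ⟨by omega, by omega⟩
      exact hba x hx k hkb
  refine ⟨k, by omega, a.map (fun x => x - k), ?_, ?_, ?_, ?_⟩
  · have := haperm.map (fun x => x - k)
    rwa [show k + 1 = 1 + k from by omega, range'_map_sub k 1 m] at this
  · intro hbad
    rw [bad1_iff] at hbad
    obtain ⟨i, j, hj1, hij, hx1, hx2⟩ := hbad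
    simp only [List.length_map] at hj1
    have e1 := v_map_sub (σ := a) (k := k) (show i < a.length by omega)
    have e2 := v_map_sub (σ := a) (k := k) (show j < a.length by omega)
    have e3 := v_map_sub (σ := a) (k := k) (show j + 1 < a.length by omega)
    have k1 := hka _ (v_mem (show i < a.length by omega))
    have k2 := hka _ (v_mem (show j < a.length by omega))
    have k3 := hka _ (v_mem (show j + 1 < a.length by omega))
    apply hb1
    rw [bad1_iff]
    refine ⟨i, j, by simp; omega, hij, ?_, ?_⟩ <;>
      rw [v_append_left (by omega), v_append_left (by omega)] <;> omega
  · intro hbad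
    rw [bad2_iff] at hbad
    obtain ⟨i, j, kk, hkk, hij, hjk, hx1, hx2⟩ := hbad
    simp only [List.length_map] at hkk
    have e1 := v_map_sub (σ := a) (k := k) (show i < a.length by omega)
    have e2 := v_map_sub (σ := a) (k := k) (show j < a.length by omega)
    have e3 := v_map_sub (σ := a) (k := k) (show kk < a.length by omega)
    have k1 := hka _ (v_mem (show i < a.length by omega))
    have k2 := hka _ (v_mem (show j < a.length by omega))
    have k3 := hka _ (v_mem (show kk < a.length by omega))
    apply hb2
    rw [bad2_iff]
    refine ⟨i, j, kk, by simp; omega, hij, hjk, ?_, ?_⟩ <;>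
      rw [v_append_left (by omega), v_append_left (by omega)] <;> omega
  · rw [List.map_map]
    have : a.map ((· + k) ∘ fun x => x - k) = a := by
      rw [List.map_congr_left (g := id) (fun x hx => by
        have := hka x hx
        simp
        omega)]
      exact List.map_id a
    rw [this, hbeq]

lemma v_inj {l : List ℕ} (h : l.Nodup) {p q : ℕ} (hp : p < l.length) (hq : q < l.length)
    (e : v l p = v l q) : p = q := by
  rw [← getElem_eq_v hp, ← getElem_eq_v hq] at e
  exact (h.getElem_inj_iff).mp e

open Classical in
noncomputable def AvF (n : ℕ) : Finset (List ℕ) :=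
  ((List.range' 1 n).permutations.toFinset).filter
    (fun τ => ¬ ContainsV [3,2,1] {1} τ ∧ ¬ ContainsV [1,3,2] ∅ τ)

lemma mem_AvF {n : ℕ} {τ : List ℕ} : τ ∈ AvF n ↔ τ ∈ AvSet n := by
  simp only [AvF, Finset.mem_filter, List.mem_toFinset, List.mem_permutations]
  constructor
  · rintro ⟨h1, h2, h3⟩; exact ⟨h1, h2, h3⟩
  · rintro ⟨h1, h2, h3⟩; exact ⟨h1, h2, h3⟩

lemma avSet_eq_coe (n : ℕ) : AvSet n = ↑(AvF n) :=
  Set.ext fun τ => by rw [Finset.mem_coe, mem_AvF]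

lemma avF_zero : AvF 0 = {[]} := by
  apply Finset.ext
  intro τ
  rw [mem_AvF, mem_avSet_iff, Finset.mem_singleton]
  constructor
  · rintro ⟨h, -, -⟩
    simpa [List.range'] using h
  · rintro rfl
    refine ⟨by simp [List.range'], ?_, ?_⟩
    · rintro ⟨i, j, hj1, -⟩; simp at hj1
    · rintro ⟨i, j, k, hk, -⟩; simp at hk

lemma avF_decomp (n : ℕ) (hn : 1 ≤ n) :
    AvF n = (Finset.range n).biUnion
      (fun k => (AvF (n - 1 - k)).image
        (fun σ => σ.map (· + k) ++ n :: List.range' 1 k)) := by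
  apply Finset.ext
  intro τ
  rw [mem_AvF, Finset.mem_biUnion]
  constructor
  · intro hτ
    obtain ⟨k, hk, σ, hp, h1, h2, heq⟩ := decomp hτ hn
    refine ⟨k, Finset.mem_range.mpr hk, Finset.mem_image.mpr ⟨σ, ?_, heq.symm⟩⟩
    rw [mem_AvF, mem_avSet_iff]
    exact ⟨hp, h1, h2⟩
  · rintro ⟨k, hk, hmem⟩
    obtain ⟨σ, hσ, rfl⟩ := Finset.mem_image.mp hmem
    rw [mem_AvF, mem_avSet_iff] at hσ
    exact build_mem (Finset.mem_range.mp hk) hσ.1 hσ.2.1 hσ.2.2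

lemma mid_val {n k : ℕ} (hk : k < n) {σ : List ℕ}
    (hl : σ.length = n - 1 - k) :
    v (σ.map (· + k) ++ n :: List.range' 1 k) (n - 1 - k) = n := by
  have : (σ.map (· + k)).length = n - 1 - k := by simp [hl]
  rw [← this, v_append_mid]

lemma card_avF (n : ℕ) (hn : 1 ≤ n) :
    (AvF n).card = ∑ j ∈ Finset.range n, (AvF j).card := by
  rw [avF_decomp n hn]
  rw [Finset.card_biUnion]
  · rw [← Finset.sum_range_reflect (fun j => (AvF j).card) n]
    apply Finset.sum_congr rfl
    intro k hk
    apply Finset.card_image_of_injOn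
    intro σ1 h1 σ2 h2 he
    have hl1 : σ1.length = n - 1 - k := by
      have := (mem_avSet_iff.mp (mem_AvF.mp h1)).1.length_eq
      simpa using this
    have hl2 : σ2.length = n - 1 - k := by
      have := (mem_avSet_iff.mp (mem_AvF.mp h2)).1.length_eq
      simpa using this
    have hmap : σ1.map (· + k) = σ2.map (· + k) :=
      (List.append_inj he (by simp [hl1, hl2])).1
    have hinj : Function.Injective (· + k : ℕ → ℕ) := add_left_injective k
    exact List.map_injective_iff.mpr hinj hmap
  · intro x hx y hy hxy
    rw [Function.onFun, Finset.disjoint_left]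
    intro τ hτx hτy
    obtain ⟨σ1, h1, he1⟩ := Finset.mem_image.mp hτx
    obtain ⟨σ2, h2, he2⟩ := Finset.mem_image.mp hτy
    have hl1 : σ1.length = n - 1 - x := by
      have := (mem_avSet_iff.mp (mem_AvF.mp h1)).1.length_eq
      simpa using this
    have hl2 : σ2.length = n - 1 - y := by
      have := (mem_avSet_iff.mp (mem_AvF.mp h2)).1.length_eq
      simpa using this
    have hτmem : τ ∈ AvSet n := by
      rw [← he1]
      apply build_mem (Finset.mem_range.mp hx)
        (mem_avSet_iff.mp (mem_AvF.mp h1)).1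
        (mem_avSet_iff.mp (mem_AvF.mp h1)).2.1
        (mem_avSet_iff.mp (mem_AvF.mp h1)).2.2
    obtain ⟨hperm, -, -⟩ := mem_avSet_iff.mp hτmem
    have hnd : τ.Nodup := hperm.nodup_iff.mpr (List.nodup_range' (s := 1) (n := n))
    have hlτ : τ.length = n := by simpa using hperm.length_eq
    have hv1 : v τ (n - 1 - x) = n := by rw [← he1]; exact mid_val (Finset.mem_range.mp hx) hl1
    have hv2 : v τ (n - 1 - y) = n := by rw [← he2]; exact mid_val (Finset.mem_range.mp hy) hl2
    have hxr := Finset.mem_range.mp hx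
    have hyr := Finset.mem_range.mp hy
    have := v_inj hnd (p := n - 1 - x) (q := n - 1 - y) (by omega) (by omega) (by omega)
    omega

noncomputable def A : ℕ → ℕ := fun n => (AvF n).card

lemma A_rec (n : ℕ) (hn : 1 ≤ n) : A n = ∑ j ∈ Finset.range n, A j :=
  card_avF n hn

lemma sum_A (n : ℕ) : ∑ j ∈ Finset.range (n + 1), A j = 2 ^ n := by
  induction n with
  | zero => simp [A, avF_zero]
  | succ n ih =>
      rw [Finset.sum_range_succ, ih, A_rec (n+1) (by omega), ih]
      ring

lemma A_eq (n : ℕ) (hn : 1 ≤ n) : A n = 2 ^ (n - 1) := by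
  obtain ⟨m, rfl⟩ : ∃ m, n = m + 1 := ⟨n - 1, by omega⟩
  rcases Nat.eq_zero_or_pos m with rfl | hm
  · rw [A_rec 1 (by omega)]
    simp [A, avF_zero]
  · rw [A_rec (m+1) (by omega), show m + 1 = (m - 1 + 1) + 1 from by omega, Finset.sum_range_succ,
      sum_A, A_rec (m - 1 + 1) (by omega), sum_A]
    rw [show m - 1 + 1 + 1 - 1 = m - 1 + 1 from by omega]
    ring

/-- |Av_n(3\un{21}, 132)| = 2^(n-1) for n ≥ 1, and |Av_0(3\un{21}, 132)| = 1. -/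
theorem card_av_3un21_132 :
    (∀ n : ℕ, 1 ≤ n →
      {τ | IsPermList n τ ∧ ¬ ContainsV [3, 2, 1] {1} τ ∧
        ¬ ContainsV [1, 3, 2] ∅ τ}.ncard = 2 ^ (n - 1)) ∧
    {τ | IsPermList 0 τ ∧ ¬ ContainsV [3, 2, 1] {1} τ ∧
      ¬ ContainsV [1, 3, 2] ∅ τ}.ncard = 1 := by
  have key : ∀ n : ℕ, {τ | IsPermList n τ ∧ ¬ ContainsV [3, 2, 1] {1} τ ∧
      ¬ ContainsV [1, 3, 2] ∅ τ}.ncard = A n := by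
    intro n
    show (AvSet n).ncard = A n
    rw [avSet_eq_coe, Set.ncard_coe_finset]
    rfl
  constructor
  · intro n hn
    rw [key n, A_eq n hn]
  · rw [key 0]
    simp [A, avF_zero]
end
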